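/- For every four-digit positive integer n (1000 ≤ n ≤ 9999), there exists k such that the k-th iterate f^[k](n) of the reflective step map equals 0 or equals 2178; that is, every four-digit number either reaches the zero limit or enters the cycle {2178, -6534, -2178, 6534}. -/
import Mathlib

set_option maxRecDepth 10000

/-- Reverse the decimal digits of a natural number. -/
def rev (m : ℕ) : ℕ := Nat.ofDigits 10 (Nat.digits 10 m).reverse

/-- The reflection of an integer: reverse its digits and flip its sign. -/
def reflect (a : ℤ) : ℤ := if 0 ≤ a then -(rev a.toNat : ℤ) else (rev (-a).toNat : ℤ)

/-- The reflective step map. -/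
def f (a : ℤ) : ℤ := a + reflect a

/-- Fuel-based digit reversal with accumulator. -/
def revAux : ℕ → ℕ → ℕ → ℕ
  | 0, _, acc => acc
  | fuel + 1, n, acc => if n = 0 then acc else revAux fuel (n / 10) (acc * 10 + n % 10)

lemma revAux_correct : ∀ (fuel n acc : ℕ), n < 10 ^ fuel →
    revAux fuel n acc = acc * 10 ^ (Nat.digits 10 n).length + rev n := by
  intro fuel
  induction fuel with
  | zero => intro n acc h; interval_cases n; simp [revAux, rev]
  | succ fuel ih =>
    intro n acc h
    by_cases hn : n = 0
    · subst hn; simp [revAux, rev]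
    · rw [revAux, if_neg hn]
      have hd : Nat.digits 10 n = n % 10 :: Nat.digits 10 (n / 10) :=
        Nat.digits_def' (by norm_num) (Nat.pos_of_ne_zero hn)
      have hlt : n / 10 < 10 ^ fuel := by
        rw [Nat.div_lt_iff_lt_mul (by norm_num)]
        calc n < 10 ^ (fuel + 1) := h
        _ = 10 ^ fuel * 10 := by ring
      rw [ih _ _ hlt]
      have hrev : rev n = rev (n / 10) + (n % 10) * 10 ^ (Nat.digits 10 (n / 10)).length := by
        unfold rev
        rw [hd, List.reverse_cons, Nat.ofDigits_append]
        simp [Nat.ofDigits, List.length_reverse, mul_comm]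
      rw [hrev, hd]
      simp only [List.length_cons]
      ring

lemma rev_eq_revAux (n : ℕ) (h : n < 10 ^ 6) : rev n = revAux 6 n 0 := by
  rw [revAux_correct 6 n 0 h]; simp

/-- One step on the absolute value. -/
def gn (m : ℕ) : ℕ := if revAux 6 m 0 ≤ m then m - revAux 6 m 0 else revAux 6 m 0 - m

/-- Bounded checker on absolute values. -/
def checkn : ℕ → ℕ → Bool
  | 0, m => m == 0 || m == 2178
  | k + 1, m => (m == 0 || m == 2178) || (m ≤ 100000 && checkn k (gn m))

lemma step_natAbs (a : ℤ) (h : a.natAbs ≤ 100000) : (f a).natAbs = gn a.natAbs := by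
  unfold f reflect gn
  split_ifs with ha hle hle
  · have ht : a.toNat = a.natAbs := by omega
    have h1 : rev a.toNat = revAux 6 a.toNat 0 := rev_eq_revAux _ (by omega)
    rw [ht] at h1 ⊢
    omega
  · have ht : a.toNat = a.natAbs := by omega
    have h1 : rev a.toNat = revAux 6 a.toNat 0 := rev_eq_revAux _ (by omega)
    rw [ht] at h1 ⊢
    omega
  · have ht : (-a).toNat = a.natAbs := by omega
    have h1 : rev (-a).toNat = revAux 6 (-a).toNat 0 := rev_eq_revAux _ (by omega)
    rw [ht] at h1 ⊢
    omega
  · have ht : (-a).toNat = a.natAbs := by omega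
    have h1 : rev (-a).toNat = revAux 6 (-a).toNat 0 := rev_eq_revAux _ (by omega)
    rw [ht] at h1 ⊢
    omega

lemma rev_2178 : rev 2178 = 8712 := by
  rw [rev_eq_revAux _ (by norm_num)]; rfl

lemma rev_6534 : rev 6534 = 4356 := by
  rw [rev_eq_revAux _ (by norm_num)]; rfl

lemma escape_neg : f^[2] (-2178) = 2178 := by
  have e1 : (-(-2178 : ℤ)).toNat = 2178 := by decide
  have e2 : ((6534 : ℤ)).toNat = 6534 := by decide
  have h1 : f (-2178) = 6534 := by
    rw [f, reflect, if_neg (by norm_num), e1, rev_2178]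
    norm_num
  have h2 : f 6534 = 2178 := by
    rw [f, reflect, if_pos (by norm_num), e2, rev_6534]
    norm_num
  rw [show (2 : ℕ) = 1 + 1 from rfl, Function.iterate_add_apply]
  simp only [Function.iterate_one, h1, h2]

lemma base_case (a : ℤ) (h : a.natAbs = 0 ∨ a.natAbs = 2178) :
    ∃ j : ℕ, f^[j] a = 0 ∨ f^[j] a = 2178 := by
  rcases h with h | h
  · exact ⟨0, Or.inl (by simpa using (by omega : a = 0))⟩
  · have : a = 2178 ∨ a = -2178 := by omega
    rcases this with h | h
    · exact ⟨0, Or.inr (by simpa using h)⟩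
    · exact ⟨2, Or.inr (by rw [h]; exact escape_neg)⟩

lemma checkn_sound : ∀ (k : ℕ) (a : ℤ), checkn k a.natAbs = true →
    ∃ j : ℕ, f^[j] a = 0 ∨ f^[j] a = 2178 := by
  intro k
  induction k with
  | zero =>
    intro a h
    simp only [checkn, Bool.or_eq_true, beq_iff_eq] at h
    exact base_case a h
  | succ k ih =>
    intro a h
    rw [checkn] at h
    simp only [Bool.or_eq_true, Bool.and_eq_true, beq_iff_eq, decide_eq_true_eq] at h
    rcases h with (h | h) | ⟨hb', h2⟩
    · exact base_case a (Or.inl h)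
    · exact base_case a (Or.inr h)
    · rw [← step_natAbs a hb'] at h2
      obtain ⟨j, hj⟩ := ih (f a) h2
      exact ⟨j + 1, by rwa [Function.iterate_succ_apply]⟩

lemma grid_checked : ∀ i : Fin 18, ∀ j : Fin 19,
    checkn 12 ((999 * ((i : ℤ) - 8) + 90 * ((j : ℤ) - 9)).natAbs) = true := by decide

lemma rev_four (a b c d : ℕ) (ha : 1 ≤ a) (ha9 : a ≤ 9) (hb : b ≤ 9) (hc : c ≤ 9) (hd : d ≤ 9) :
    rev (1000 * a + 100 * b + 10 * c + d) = 1000 * d + 100 * c + 10 * b + a := by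
  have e1 : Nat.digits 10 (1000 * a + 100 * b + 10 * c + d)
      = d :: Nat.digits 10 (100 * a + 10 * b + c) := by
    rw [Nat.digits_def' (by norm_num) (by omega)]
    congr 1
    · omega
    · congr 1; omega
  have e2 : Nat.digits 10 (100 * a + 10 * b + c) = c :: Nat.digits 10 (10 * a + b) := by
    rw [Nat.digits_def' (by norm_num) (by omega)]
    congr 1
    · omega
    · congr 1; omega
  have e3 : Nat.digits 10 (10 * a + b) = b :: Nat.digits 10 a := by
    rw [Nat.digits_def' (by norm_num) (by omega)]
    congr 1
    · omega
    · congr 1; omega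
  have e4 : Nat.digits 10 a = [a] := by
    rw [Nat.digits_def' (by norm_num) (by omega)]
    have h1 : a % 10 = a := by omega
    have h2 : a / 10 = 0 := by omega
    rw [h1, h2, Nat.digits_zero]
  unfold rev
  rw [e1, e2, e3, e4]
  simp [Nat.ofDigits]
  ring

theorem four_digit_limits (n : ℤ) (h1 : 1000 ≤ n) (h2 : n ≤ 9999) :
    ∃ k : ℕ, f^[k] n = 0 ∨ f^[k] n = 2178 := by
  -- extract the four digits of n
  set m := n.toNat with hm
  set a := m / 1000 with hA
  set b := m / 100 % 10 with hB
  set c := m / 10 % 10 with hC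
  set d := m % 10 with hD
  have hsum : m = 1000 * a + 100 * b + 10 * c + d := by omega
  have ha1 : 1 ≤ a := by omega
  have ha9 : a ≤ 9 := by omega
  have hb9 : b ≤ 9 := by omega
  have hc9 : c ≤ 9 := by omega
  have hd9 : d ≤ 9 := by omega
  -- compute f n
  have hrev : rev m = 1000 * d + 100 * c + 10 * b + a := by
    rw [hsum]; exact rev_four a b c d ha1 ha9 hb9 hc9 hd9
  have hfn : f n = 999 * ((a : ℤ) - d) + 90 * ((b : ℤ) - c) := by
    unfold f reflect
    rw [if_pos (by omega), ← hm, hrev]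
    have hnm : n = (m : ℤ) := by omega
    rw [hnm]
    push_cast [hsum]
    ring
  -- use the grid lemma
  have hi : a + 8 - d < 18 := by omega
  have hj : b + 9 - c < 19 := by omega
  have := grid_checked ⟨a + 8 - d, hi⟩ ⟨b + 9 - c, hj⟩
  simp only [Fin.val_mk] at this
  have heq : 999 * (((a + 8 - d : ℕ) : ℤ) - 8) + 90 * (((b + 9 - c : ℕ) : ℤ) - 9) = f n := by
    rw [hfn]
    omega
  rw [heq] at this
  obtain ⟨j, hj'⟩ := checkn_sound 12 (f n) this
  exact ⟨j + 1, by rwa [Function.iterate_succ_apply]⟩
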